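/- Let I ⊆ ℝ be an open interval, k ≥ 1, and let N : I → Mat_{k×k}(ℝ) be a differentiable family of symmetric matrices such that the operator norm of N′(t) − Id is at most ε for every t ∈ I, where 0 < ε < 1/k. Then the set {t ∈ I : det N(t) = 0} contains at most k elements. -/

import Mathlib

/-!
At each zero `t` of `det N` pick a unit vector `v t` with `N t *ᵥ v t = 0`. For two zeros
`s ≠ t`, the function `τ ↦ ⟪v s, (N τ - τ • 1) (v t)⟫` has derivative
`⟪v s, (N' τ - 1) (v t)⟫`, of size at most `ε`, and its values at `t` and `s` are
`-t ⟪v s, v t⟫` and `-s ⟪v s, v t⟫` (the latter because `N s` is symmetric). The mean value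
inequality therefore gives `|⟪v s, v t⟫| ≤ ε`. The Gram matrix of `k + 1` such vectors is
strictly diagonally dominant when `k ε < 1`, so by Gershgorin they would be linearly
independent in `ℝᵏ`, which is absurd.
-/

open Matrix Set
open scoped RealInnerProductSpace

theorem Set.exists_finset_card_le_of_forall_card_ne {α : Type*} {S : Set α} {k : ℕ}
    (h : ∀ s : Finset α, ↑s ⊆ S → s.card ≠ k + 1) :
    ∃ s : Finset α, s.card ≤ k ∧ S ⊆ ↑s := by
  have hS : S.Finite := by
    by_contra hinf
    obtain ⟨s, hsS, hs⟩ := Set.Infinite.exists_subset_card_eq hinf (k + 1)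
    exact h s hsS hs
  refine ⟨hS.toFinset, ?_, by simp⟩
  by_contra! hlt
  obtain ⟨s, hsS, hs⟩ := Finset.exists_subset_card_eq hlt
  exact h s (by simpa using hsS) hs

theorem linearIndependent_of_abs_inner_le {ι E : Type*} [Fintype ι] [DecidableEq ι]
    [NormedAddCommGroup E] [InnerProductSpace ℝ E] {v : ι → E} {ε : ℝ}
    (hv : ∀ i, ‖v i‖ = 1) (hvv : Pairwise fun i j => |⟪v i, v j⟫| ≤ ε)
    (hε : (Fintype.card ι - 1) * ε < 1) : LinearIndependent ℝ v := by
  refine linearIndependent_of_det_gram_ne_zero (det_ne_zero_of_sum_row_lt_diag fun i => ?_)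
  have hcard : ((Finset.univ.erase i).card : ℝ) = Fintype.card ι - 1 := by
    rw [Finset.card_erase_of_mem (Finset.mem_univ i), Finset.card_univ,
      Nat.cast_sub (Fintype.card_pos_iff.2 ⟨i⟩)]
    simp
  calc ∑ j ∈ Finset.univ.erase i, ‖gram ℝ v i j‖
      ≤ ∑ j ∈ Finset.univ.erase i, ε :=
        Finset.sum_le_sum fun j hj => hvv (Finset.ne_of_mem_erase hj).symm
    _ < 1 := by rwa [Finset.sum_const, nsmul_eq_mul, hcard]
    _ = ‖gram ℝ v i i‖ := by simp [gram_apply, hv i]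

theorem Matrix.exists_norm_eq_one_mulVec_eq_zero {n : Type*} [Fintype n] [DecidableEq n]
    {A : Matrix n n ℝ} (hA : A.det = 0) :
    ∃ v : EuclideanSpace ℝ n, ‖v‖ = 1 ∧ A *ᵥ v = 0 := by
  obtain ⟨v, hv0, hAv⟩ := exists_mulVec_eq_zero_iff.2 hA
  have hv : WithLp.toLp 2 v ≠ 0 := by simpa using hv0
  refine ⟨‖WithLp.toLp 2 v‖⁻¹ • WithLp.toLp 2 v, norm_smul_inv_norm hv, ?_⟩
  simp [mulVec_smul, hAv]

theorem Matrix.hasDerivAt_dotProduct_mulVec {m n : Type*} [Fintype m] [Fintype n]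
    {N : ℝ → Matrix m n ℝ} {N' : Matrix m n ℝ} {t : ℝ}
    (hN : ∀ i j, HasDerivAt (fun s => N s i j) (N' i j) t) (x : m → ℝ) (y : n → ℝ) :
    HasDerivAt (fun s => x ⬝ᵥ N s *ᵥ y) (x ⬝ᵥ N' *ᵥ y) t := by
  simp only [dotProduct, mulVec, Finset.mul_sum]
  exact HasDerivAt.fun_sum fun i _ => HasDerivAt.fun_sum fun j _ =>
    ((hN i j).mul_const (y j)).const_mul (x i)

theorem abs_inner_le_of_mulVec_eq_zero {n : Type*} [Fintype n] [DecidableEq n]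
    {S : Set ℝ} (hS : Convex ℝ S) {N N' : ℝ → Matrix n n ℝ} {ε : ℝ}
    (hderiv : ∀ t ∈ S, ∀ i j, HasDerivAt (fun s => N s i j) (N' t i j) t)
    (hnorm : ∀ t ∈ S, ‖toEuclideanCLM (n := n) (𝕜 := ℝ) (N' t - 1)‖ ≤ ε)
    {s t : ℝ} (hs : s ∈ S) (ht : t ∈ S) (hst : s ≠ t) (hsymm : (N s).IsSymm)
    {v w : EuclideanSpace ℝ n} (hv : N s *ᵥ v = 0) (hw : N t *ᵥ w = 0) :
    |⟪v, w⟫| ≤ ε * ‖v‖ * ‖w‖ := by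
  set f : ℝ → ℝ := fun τ => v ⬝ᵥ N τ *ᵥ w - τ * ⟪v, w⟫
  set T := fun τ => toEuclideanCLM (n := n) (𝕜 := ℝ) (N' τ - 1)
  have hf : ∀ τ ∈ S, HasDerivWithinAt f ⟪v, T τ w⟫ S τ := by
    intro τ hτ
    have hq : ⟪v, T τ w⟫ = v ⬝ᵥ N' τ *ᵥ w - ⟪v, w⟫ := by
      rw [inner_toEuclideanCLM, sub_mulVec, one_mulVec, dotProduct_sub,
        EuclideanSpace.inner_eq_star_dotProduct, star_trivial, dotProduct_comm (w : n → ℝ)]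
    rw [hq]
    exact ((hasDerivAt_dotProduct_mulVec (hderiv τ hτ) v w).sub
      (hasDerivAt_mul_const ⟪v, w⟫)).hasDerivWithinAt
  have hbound : ∀ τ ∈ S, ‖⟪v, T τ w⟫‖ ≤ ε * ‖v‖ * ‖w‖ := by
    intro τ hτ
    calc _ ≤ ‖v‖ * ‖T τ w‖ := norm_inner_le_norm _ _
      _ ≤ ‖v‖ * (ε * ‖w‖) := by gcongr; exact (T τ).le_of_opNorm_le (hnorm τ hτ) w
      _ = ε * ‖v‖ * ‖w‖ := by ring
  have hmvt := hS.norm_image_sub_le_of_norm_hasDerivWithin_le hf hbound hs ht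
  have hfst : f t - f s = -((t - s) * ⟪v, w⟫) := by
    have h1 : (v : n → ℝ) ⬝ᵥ N s *ᵥ w = 0 := by
      rw [dotProduct_mulVec, ← mulVec_transpose, hsymm, hv, zero_dotProduct]
    simp only [f, hw, dotProduct_zero, h1]
    ring
  rw [hfst, norm_neg, norm_mul, Real.norm_eq_abs, Real.norm_eq_abs, mul_comm] at hmvt
  exact le_of_mul_le_mul_right hmvt (abs_pos.2 (sub_ne_zero.2 hst.symm))

theorem stmt_8_general (k : ℕ) (hk : 1 ≤ k) (a b : ℝ)
    (N N' : ℝ → Matrix (Fin k) (Fin k) ℝ) (ε : ℝ)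
    (hεk : ε < 1 / (k : ℝ))
    (hsymm : ∀ t ∈ Set.Ioo a b, (N t).IsSymm)
    (hderiv : ∀ t ∈ Set.Ioo a b, ∀ i j : Fin k,
      HasDerivAt (fun s => N s i j) (N' t i j) t)
    (hnorm : ∀ t ∈ Set.Ioo a b,
      ‖Matrix.toEuclideanCLM (n := Fin k) (𝕜 := ℝ) (N' t - 1)‖ ≤ ε) :
    ∃ s : Finset ℝ, s.card ≤ k ∧
      ∀ t ∈ Set.Ioo a b, (N t).det = 0 → t ∈ s := by
  have hkε : ((k + 1 : ℕ) - 1 : ℝ) * ε < 1 := by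
    rwa [Nat.cast_add_one, add_sub_cancel_right, mul_comm, ← lt_div_iff₀ (by exact_mod_cast hk)]
  set Z := {t | t ∈ Ioo a b ∧ (N t).det = 0}
  choose! v hv1 hv0 using fun t (ht : t ∈ Z) => exists_norm_eq_one_mulVec_eq_zero ht.2
  suffices h : ∀ s : Finset ℝ, ↑s ⊆ Z → s.card ≠ k + 1 by
    obtain ⟨s, hcard, hZs⟩ := Set.exists_finset_card_le_of_forall_card_ne h
    exact ⟨s, hcard, fun t ht hdet => hZs ⟨ht, hdet⟩⟩
  intro s hsZ hcard
  have hs : ∀ t : s, (t : ℝ) ∈ Z := fun t => hsZ t.2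
  have hli : LinearIndependent ℝ fun t : s => v t := by
    refine linearIndependent_of_abs_inner_le (fun t => hv1 t (hs t)) (fun t u htu => ?_)
      (by rwa [Fintype.card_coe, hcard])
    simpa [hv1 t (hs t), hv1 u (hs u)] using
      abs_inner_le_of_mulVec_eq_zero (convex_Ioo a b) hderiv hnorm (hs t).1 (hs u).1
        (Subtype.coe_injective.ne htu) (hsymm t (hs t).1) (hv0 t (hs t)) (hv0 u (hs u))
  have hle := hli.fintype_card_le_finrank
  rw [Fintype.card_coe, hcard, finrank_euclideanSpace_fin] at hle
  omega

/-- Let `I = (a,b)` be an open interval and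
`N : I → Mat_{k×k}(ℝ)` a differentiable family of symmetric matrices whose
derivative `N'` satisfies `‖N'(t) − Id‖ ≤ ε` in the operator norm for all
`t ∈ I`, where `0 < ε < 1/k`.  Then `{t ∈ I : det N(t) = 0}` has at most `k`
elements. -/
theorem stmt_8 (k : ℕ) (hk : 1 ≤ k) (a b : ℝ)
    (N N' : ℝ → Matrix (Fin k) (Fin k) ℝ) (ε : ℝ)
    (hε0 : 0 < ε) (hεk : ε < 1 / (k : ℝ))
    (hsymm : ∀ t ∈ Set.Ioo a b, (N t).IsSymm)
    (hderiv : ∀ t ∈ Set.Ioo a b, ∀ i j : Fin k,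
      HasDerivAt (fun s => N s i j) (N' t i j) t)
    (hnorm : ∀ t ∈ Set.Ioo a b,
      ‖Matrix.toEuclideanCLM (n := Fin k) (𝕜 := ℝ) (N' t - 1)‖ ≤ ε) :
    ∃ s : Finset ℝ, s.card ≤ k ∧
      ∀ t ∈ Set.Ioo a b, (N t).det = 0 → t ∈ s :=
  stmt_8_general k hk a b N N' ε hεk hsymm hderiv hnorm
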